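/- Let $g:(0,\infty)\to[0,\infty]$ be nonincreasing, $S_n=(2^{-(n+1)},2^{-n}]$, $c\in(0,1)$, $N\in\mathbb N$, and $B\subseteq(0,\infty)$ measurable with $\lambda(B\cap S_n)\le c\,2^{-(n+1)}$ for all $n\ge N$. If $\int_{(0,\infty)\setminus B} g\,d\lambda<\infty$, then $\int_0^{2^{-N}} g\,d\lambda<\infty$. -/

import Mathlib

/-! On the shell `S n = (2^{-(n+1)}, 2^{-n}]` the antitone `g` is at most `a = g (2^{-(n+1)})` on
`S n ∩ B` and at least `a` on `S (n+1) \ B`, while `λ (S n ∩ B) ≤ c 2^{-(n+1)}` and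
`λ (S (n+1) \ B) ≥ (1 - c) 2^{-(n+2)}`. Hence `∫_{S n ∩ B} g ≤ 2c/(1-c) ∫_{S (n+1) \ B} g`, and
summing over the disjoint shells `S n`, `n ≥ N`, bounds `∫_0^{2^{-N}} g` by
`(1 + 2c/(1-c)) ∫_{(0,∞) \ B} g`. -/

open MeasureTheory Set Function
open scoped ENNReal

theorem setLIntegral_le_mul_setLIntegral_of_le_of_le {α : Type*} [MeasurableSpace α]
    {μ : Measure α} {f : α → ℝ≥0∞} {s t : Set α} {a K : ℝ≥0∞}
    (hs : MeasurableSet s) (ht : MeasurableSet t)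
    (hfs : ∀ x ∈ s, f x ≤ a) (hft : ∀ x ∈ t, a ≤ f x) (hμ : μ s ≤ K * μ t) :
    ∫⁻ x in s, f x ∂μ ≤ K * ∫⁻ x in t, f x ∂μ :=
  calc ∫⁻ x in s, f x ∂μ ≤ ∫⁻ _ in s, a ∂μ := setLIntegral_mono' hs hfs
    _ = a * μ s := setLIntegral_const s a
    _ ≤ a * (K * μ t) := by gcongr
    _ = K * ∫⁻ _ in t, a ∂μ := by rw [setLIntegral_const]; ring
    _ ≤ K * ∫⁻ x in t, f x ∂μ := by gcongr K * ?_; exact setLIntegral_mono' ht hft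

theorem two_rpow_neg_natCast (n : ℕ) : (2 : ℝ) ^ (-(n : ℝ)) = 2⁻¹ ^ n := by
  rw [Real.rpow_neg zero_le_two, Real.rpow_natCast, inv_pow]

theorem two_rpow_neg_natCast_add_one (n : ℕ) : (2 : ℝ) ^ (-((n : ℝ) + 1)) = 2⁻¹ ^ (n + 1) :=
  mod_cast two_rpow_neg_natCast (n + 1)

def dyadicShell (n : ℕ) : Set ℝ := Ioc (2⁻¹ ^ (n + 1)) (2⁻¹ ^ n)

theorem measurableSet_dyadicShell (n : ℕ) : MeasurableSet (dyadicShell n) := measurableSet_Ioc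

theorem volume_dyadicShell (n : ℕ) : volume (dyadicShell n) = ENNReal.ofReal (2⁻¹ ^ (n + 1)) := by
  rw [dyadicShell, Real.volume_Ioc, pow_succ]
  congr 1
  ring

theorem pairwise_disjoint_dyadicShell : Pairwise (Disjoint on dyadicShell) := by
  intro m n hmn
  wlog h : m < n generalizing m n
  · exact (this hmn.symm (hmn.lt_or_gt.resolve_left h)).symm
  refine disjoint_left.2 fun x hxm hxn => ?_
  have : (2⁻¹ : ℝ) ^ n ≤ 2⁻¹ ^ (m + 1) := pow_le_pow_of_le_one (by norm_num) (by norm_num) h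
  exact (hxn.2.trans this).not_gt hxm.1

theorem iUnion_dyadicShell_add (N : ℕ) : ⋃ k, dyadicShell (N + k) = Ioc 0 (2⁻¹ ^ N) := by
  ext x
  simp only [mem_iUnion, dyadicShell, mem_Ioc]
  constructor
  · rintro ⟨k, hk, hxk⟩
    exact ⟨(pow_pos (by norm_num) _).trans hk,
      hxk.trans (pow_le_pow_of_le_one (by norm_num) (by norm_num) (N.le_add_right k))⟩
  · rintro ⟨hx0, hxN⟩
    obtain ⟨n, hn, hxn⟩ := exists_nat_pow_near_of_lt_one hx0
      (hxN.trans (pow_le_one₀ (by norm_num) (by norm_num))) (by norm_num : (0 : ℝ) < 2⁻¹)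
      (by norm_num)
    have hNn : N ≤ n := by
      by_contra! h
      exact (hxN.trans (pow_le_pow_of_le_one (by norm_num) (by norm_num) h)).not_gt hn
    obtain ⟨k, rfl⟩ := Nat.exists_eq_add_of_le hNn
    exact ⟨k, hn, hxn⟩

theorem tsum_setLIntegral_dyadicShell_sdiff (f : ℝ → ℝ≥0∞) (N : ℕ) {s : Set ℝ}
    (hs : MeasurableSet s) :
    ∑' k, ∫⁻ x in dyadicShell (N + k) \ s, f x = ∫⁻ x in Ioc 0 (2⁻¹ ^ N) \ s, f x := by
  rw [← iUnion_dyadicShell_add, iUnion_sdiff, lintegral_iUnion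
    (fun k => (measurableSet_dyadicShell _).diff hs)]
  exact ((pairwise_disjoint_dyadicShell.comp_of_injective (add_right_injective N)).mono
    fun _ _ h => h.mono sdiff_subset sdiff_subset)

theorem ofReal_le_volume_dyadicShell_sdiff {B : Set ℝ} {c : ℝ} {n : ℕ} (hc : 0 ≤ c)
    (hBn : volume (dyadicShell n ∩ B) ≤ ENNReal.ofReal (c * 2⁻¹ ^ (n + 1))) :
    ENNReal.ofReal ((1 - c) * 2⁻¹ ^ (n + 1)) ≤ volume (dyadicShell n \ B) :=
  calc ENNReal.ofReal ((1 - c) * 2⁻¹ ^ (n + 1))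
      = ENNReal.ofReal (2⁻¹ ^ (n + 1)) - ENNReal.ofReal (c * 2⁻¹ ^ (n + 1)) := by
        rw [← ENNReal.ofReal_sub _ (by positivity), sub_mul, one_mul]
    _ ≤ volume (dyadicShell n) - volume (dyadicShell n ∩ B) := by
        rw [volume_dyadicShell]; gcongr
    _ ≤ volume (dyadicShell n \ B) := by
        rw [← sdiff_self_inter]; exact le_measure_sdiff

theorem setLIntegral_dyadicShell_le {g : ℝ → ℝ≥0∞} (hg : AntitoneOn g (Ioi 0)) {B : Set ℝ}
    (hB : MeasurableSet B) {c : ℝ} (hc0 : 0 ≤ c) (hc1 : c < 1) {n : ℕ}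
    (hBn : volume (dyadicShell n ∩ B) ≤ ENNReal.ofReal (c * 2⁻¹ ^ (n + 1)))
    (hBn' : volume (dyadicShell (n + 1) ∩ B) ≤ ENNReal.ofReal (c * 2⁻¹ ^ (n + 2))) :
    ∫⁻ x in dyadicShell n, g x ≤ (∫⁻ x in dyadicShell n \ B, g x)
      + ENNReal.ofReal (2 * c / (1 - c)) * ∫⁻ x in dyadicShell (n + 1) \ B, g x := by
  have hpos : (0 : ℝ) < 2⁻¹ ^ (n + 1) := by positivity
  rw [← lintegral_inter_add_sdiff g (dyadicShell n) hB, add_comm]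
  gcongr _ + ?_
  refine setLIntegral_le_mul_setLIntegral_of_le_of_le (a := g (2⁻¹ ^ (n + 1)))
    ((measurableSet_dyadicShell n).inter hB) ((measurableSet_dyadicShell _).diff hB)
    (fun x hx => hg hpos (hpos.trans hx.1.1) hx.1.1.le)
    (fun x hx => hg ((pow_pos (by norm_num) _).trans hx.1.1) hpos hx.1.2) ?_
  calc volume (dyadicShell n ∩ B) ≤ ENNReal.ofReal (c * 2⁻¹ ^ (n + 1)) := hBn
    _ = ENNReal.ofReal (2 * c / (1 - c)) * ENNReal.ofReal ((1 - c) * 2⁻¹ ^ (n + 2)) := by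
        rw [← ENNReal.ofReal_mul (div_nonneg (by positivity) (sub_nonneg.2 hc1.le))]
        congr 1
        field_simp [(sub_pos.2 hc1).ne']
        ring
    _ ≤ ENNReal.ofReal (2 * c / (1 - c)) * volume (dyadicShell (n + 1) \ B) := by
        gcongr
        exact ofReal_le_volume_dyadicShell_sdiff hc0 hBn'

theorem stmt8_general (g : ℝ → ENNReal) (hg : AntitoneOn g (Set.Ioi 0))
    (c : ℝ) (hc : c ∈ Set.Ioo (0:ℝ) 1) (N : ℕ)
    (B : Set ℝ) (hB : MeasurableSet B)
    (hmeas : ∀ n : ℕ, N ≤ n →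
      volume (B ∩ Set.Ioc ((2:ℝ) ^ (-((n:ℝ) + 1))) ((2:ℝ) ^ (-(n:ℝ))))
        ≤ ENNReal.ofReal (c * (2:ℝ) ^ (-((n:ℝ) + 1))))
    (hfin : ∫⁻ x in Set.Ioi (0:ℝ) \ B, g x < ⊤) :
    ∫⁻ x in Set.Ioc (0:ℝ) ((2:ℝ) ^ (-(N:ℝ))), g x < ⊤ := by
  have hshell : ∀ n, N ≤ n → volume (dyadicShell n ∩ B) ≤ ENNReal.ofReal (c * 2⁻¹ ^ (n + 1)) :=
    fun n hn => by
      simpa only [dyadicShell, inter_comm B, two_rpow_neg_natCast,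
        two_rpow_neg_natCast_add_one] using hmeas n hn
  have hmono : ∀ M, ∫⁻ x in Ioc 0 (2⁻¹ ^ M) \ B, g x ≤ ∫⁻ x in Ioi 0 \ B, g x := fun M =>
    lintegral_mono_set (sdiff_subset_sdiff_left Ioc_subset_Ioi_self)
  set K := ENNReal.ofReal (2 * c / (1 - c))
  calc ∫⁻ x in Ioc 0 ((2 : ℝ) ^ (-(N : ℝ))), g x
      = ∑' k, ∫⁻ x in dyadicShell (N + k), g x := by
        simpa only [sdiff_empty, two_rpow_neg_natCast] using
          (tsum_setLIntegral_dyadicShell_sdiff g N MeasurableSet.empty).symm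
    _ ≤ ∑' k, ((∫⁻ x in dyadicShell (N + k) \ B, g x)
          + K * ∫⁻ x in dyadicShell (N + 1 + k) \ B, g x) := by
        refine ENNReal.tsum_le_tsum fun k => ?_
        rw [add_right_comm]
        exact setLIntegral_dyadicShell_le hg hB hc.1.le hc.2 (hshell _ (by omega))
          (hshell _ (by omega))
    _ = (∫⁻ x in Ioc 0 (2⁻¹ ^ N) \ B, g x) + K * ∫⁻ x in Ioc 0 (2⁻¹ ^ (N + 1)) \ B, g x := by
        rw [ENNReal.tsum_add, ENNReal.tsum_mul_left, tsum_setLIntegral_dyadicShell_sdiff _ _ hB,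
          tsum_setLIntegral_dyadicShell_sdiff _ _ hB]
    _ ≤ (∫⁻ x in Ioi 0 \ B, g x) + K * ∫⁻ x in Ioi 0 \ B, g x := by
        gcongr ?_ + K * ?_ <;> exact hmono _
    _ < ⊤ := ENNReal.add_lt_top.2 ⟨hfin, ENNReal.mul_lt_top ENNReal.ofReal_lt_top hfin⟩

/-- Summed shell comparison: if a measurable `B ⊆ (0,∞)` occupies at most a
fraction `c` of each shell `S_n = (2^{-(n+1)}, 2^{-n}]` for `n ≥ N`, and `g` is
nonincreasing on `(0,∞)` with `∫_{(0,∞)\B} g < ∞`, then `∫_0^{2^{-N}} g < ∞`. -/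
theorem stmt8 (g : ℝ → ENNReal) (hg : AntitoneOn g (Set.Ioi 0))
    (c : ℝ) (hc : c ∈ Set.Ioo (0:ℝ) 1) (N : ℕ)
    (B : Set ℝ) (hB : MeasurableSet B) (hB0 : B ⊆ Set.Ioi 0)
    (hmeas : ∀ n : ℕ, N ≤ n →
      volume (B ∩ Set.Ioc ((2:ℝ) ^ (-((n:ℝ) + 1))) ((2:ℝ) ^ (-(n:ℝ))))
        ≤ ENNReal.ofReal (c * (2:ℝ) ^ (-((n:ℝ) + 1))))
    (hfin : ∫⁻ x in Set.Ioi (0:ℝ) \ B, g x < ⊤) :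
    ∫⁻ x in Set.Ioc (0:ℝ) ((2:ℝ) ^ (-(N:ℝ))), g x < ⊤ :=
  stmt8_general g hg c hc N B hB hmeas hfin
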